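/- Let m : Finset(Fin n) → ℝ_{>0} and 0 ≤ P ≤ n. Then Σ_{p=P+1}^n (1/C(n,p)) Σ_{|T|=p} (1/p) Σ_{j∈T} [log m(T^c ∪ {j}) − log m(T^c)] = (1/C(n,P)) Σ_{|T|=P} log m(T^c) − log m(∅). -/

import Mathlib

/-!
Write `A k` for the average of `g Tᶜ` over the `k`-element sets `T`. Removing one point from a
`(k+1)`-set gives a `k`-set, and every `k`-set arises in this way from exactly `n - k` pairs, so
by double counting and `C(n, k+1) (k+1) = C(n, k) (n-k)` the leave-`(k+1)`-out score equals
`A k - A (k+1)`. The sum of scores therefore telescopes to `A P - A n`, and `A n = g ∅`.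
-/

open Finset

section
variable {α : Type*} [Fintype α] [DecidableEq α]

theorem sum_powersetCard_succ_sum_erase {M : Type*} [AddCommMonoid M] (k : ℕ)
    (f : Finset α → M) :
    ∑ T ∈ univ.powersetCard (k + 1), ∑ j ∈ T, f (T.erase j) =
      (Fintype.card α - k) • ∑ S ∈ univ.powersetCard k, f S := by
  have hcompl : ∑ S ∈ univ.powersetCard k, ∑ _j ∈ Sᶜ, f S =
      (Fintype.card α - k) • ∑ S ∈ univ.powersetCard k, f S := by
    rw [smul_sum]
    refine sum_congr rfl fun S hS => ?_
    rw [sum_const, card_compl, mem_powersetCard_univ.mp hS]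
  rw [← hcompl, sum_sigma', sum_sigma']
  refine sum_nbij' (fun x => ⟨x.1.erase x.2, x.2⟩) (fun x => ⟨insert x.2 x.1, x.2⟩)
    ?_ ?_ ?_ ?_ fun _ _ => rfl
  · rintro ⟨T, j⟩ hT
    simp only [mem_sigma, mem_powersetCard_univ] at hT ⊢
    simp [card_erase_of_mem hT.2, hT.1]
  · rintro ⟨S, j⟩ hS
    simp only [mem_sigma, mem_powersetCard_univ, mem_compl] at hS ⊢
    simp [card_insert_of_notMem hS.2, hS.1]
  · rintro ⟨T, j⟩ hT
    simp only [mem_sigma, mem_powersetCard_univ] at hT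
    simp [insert_erase hT.2]
  · rintro ⟨S, j⟩ hS
    simp only [mem_sigma, mem_powersetCard_univ, mem_compl] at hS
    simp [erase_insert hS.2]

noncomputable def complAverage (g : Finset α → ℝ) (k : ℕ) : ℝ :=
  ((Fintype.card α).choose k : ℝ)⁻¹ * ∑ T ∈ univ.powersetCard k, g Tᶜ

noncomputable def leaveOutScore (g : Finset α → ℝ) (p : ℕ) : ℝ :=
  ((Fintype.card α).choose p : ℝ)⁻¹ * ∑ T ∈ univ.powersetCard p,
    (p : ℝ)⁻¹ * ∑ j ∈ T, (g (Tᶜ ∪ {j}) - g Tᶜ)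

theorem complAverage_card (g : Finset α → ℝ) : complAverage g (Fintype.card α) = g ∅ := by
  simp [complAverage, ← card_univ, powersetCard_self]

theorem leaveOutScore_succ (g : Finset α → ℝ) {k : ℕ} (hk : k < Fintype.card α) :
    leaveOutScore g (k + 1) = complAverage g k - complAverage g (k + 1) := by
  have hscore : ∀ T ∈ univ.powersetCard (k + 1),
      ((k + 1 : ℕ) : ℝ)⁻¹ * ∑ j ∈ T, (g (Tᶜ ∪ {j}) - g Tᶜ) =
        ((k + 1 : ℕ) : ℝ)⁻¹ * ∑ j ∈ T, g (T.erase j)ᶜ - g Tᶜ := by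
    intro T hT
    rw [sum_sub_distrib, sum_const, mem_powersetCard_univ.mp hT, nsmul_eq_mul, mul_sub,
      inv_mul_cancel_left₀ (by positivity)]
    simp only [union_singleton, compl_erase]
  have hchoose : ((Fintype.card α).choose (k + 1) : ℝ) * (k + 1 : ℕ) =
      (Fintype.card α).choose k * (Fintype.card α - k : ℕ) := by
    exact_mod_cast Nat.choose_succ_right_eq _ _
  have hk₀ : ((Fintype.card α).choose (k + 1) : ℝ) ≠ 0 := by
    exact_mod_cast (Nat.choose_pos hk).ne'
  have hk₁ : ((Fintype.card α).choose k : ℝ) ≠ 0 := by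
    exact_mod_cast (Nat.choose_pos hk.le).ne'
  rw [leaveOutScore, sum_congr rfl hscore, sum_sub_distrib, ← mul_sum,
    sum_powersetCard_succ_sum_erase k (fun S => g Sᶜ), nsmul_eq_mul, complAverage, complAverage]
  field_simp
  linear_combination -(∑ S ∈ univ.powersetCard k, g Sᶜ) * hchoose

theorem sum_Icc_leaveOutScore (g : Finset α → ℝ) {k : ℕ} (hk : k ≤ Fintype.card α) :
    ∑ p ∈ Icc (k + 1) (Fintype.card α), leaveOutScore g p = complAverage g k - g ∅ := by
  rw [← Ico_add_one_right_eq_Icc, ← sum_Ico_add', ← complAverage_card g,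
    ← neg_sub, ← sum_Ico_sub (complAverage g) hk, ← sum_neg_distrib]
  refine sum_congr rfl fun q hq => ?_
  rw [leaveOutScore_succ g (mem_Ico.mp hq).2, neg_sub]

end

theorem stmt11_general (n : ℕ) (m : Finset (Fin n) → ℝ) (P : ℕ) (hP : P ≤ n) :
    ∑ p ∈ Finset.Icc (P + 1) n, ((n.choose p : ℝ))⁻¹ *
      ∑ T ∈ (Finset.univ : Finset (Fin n)).powersetCard p, (p : ℝ)⁻¹ *
        ∑ j ∈ T, (Real.log (m (Tᶜ ∪ {j})) - Real.log (m Tᶜ)) =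
    ((n.choose P : ℝ))⁻¹ *
      ∑ T ∈ (Finset.univ : Finset (Fin n)).powersetCard P, Real.log (m Tᶜ) -
    Real.log (m ∅) := by
  have h := sum_Icc_leaveOutScore (fun S => Real.log (m S))
    (hP.trans_eq (Fintype.card_fin n).symm)
  simpa only [leaveOutScore, complAverage, Fintype.card_fin] using h

/-- Subset-indexed form of Proposition 3: the tail sum of leave-`p`-out scores for
`p` from `P+1` to `n` equals the average over `P`-element sets `T` of `log m(T^c)`,
minus `log m(∅)`. -/
theorem stmt11 (n : ℕ) (m : Finset (Fin n) → ℝ) (hpos : ∀ S, 0 < m S)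
    (P : ℕ) (hP : P ≤ n) :
    ∑ p ∈ Finset.Icc (P + 1) n, ((n.choose p : ℝ))⁻¹ *
      ∑ T ∈ (Finset.univ : Finset (Fin n)).powersetCard p, (p : ℝ)⁻¹ *
        ∑ j ∈ T, (Real.log (m (Tᶜ ∪ {j})) - Real.log (m Tᶜ)) =
    ((n.choose P : ℝ))⁻¹ *
      ∑ T ∈ (Finset.univ : Finset (Fin n)).powersetCard P, Real.log (m Tᶜ) -
    Real.log (m ∅) :=
  stmt11_general n m P hP
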